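/- arXiv:0710.0394 — 3 statements merged into one kernel-verified Lean document; each statement's English description precedes it below -/
import Mathlib

section
/- If f and g are PORC functions on a set D of integers, h(x) = f(x)/g(x) for all x in D (with g(x) ≠ 0), and h takes only integer values on D, then h is PORC on D. -/
/-- `f : ℤ → ℚ` is PORC (polynomial on residue classes) on a set `D` of integers if
there is a positive integer `N` such that on the intersection of `D` with each residue
class mod `N`, `f` agrees with a polynomial with rational coefficients. -/
def IsPORC (D : Set ℤ) (f : ℤ → ℚ) : Prop :=
  ∃ N : ℕ, 0 < N ∧ ∀ j : ℤ, ∃ P : Polynomial ℚ,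
    ∀ x ∈ D, x % (N : ℤ) = j → f x = P.eval (x : ℚ)

/-!
Fix a residue class on which `f = P` and `g = Q`. If it meets `D` in finitely many points,
interpolate. Otherwise write `P = Q * T + R` with `deg R < deg Q` and choose an integer `d ≠ 0`
with `d * T` integer-valued on `ℤ`. Then `d * R(x) / Q(x) = d * h(x) - d * T(x)` is an integer at
infinitely many integers `x` and tends to `0` as `|x| → ∞`, so it vanishes infinitely often;
hence `R = 0` and `h = T` on the class.
-/

open Polynomial Filter Topology

namespace Polynomial

theorem exists_int_mul_eval_intCast (p : ℚ[X]) :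
    ∃ d : ℤ, d ≠ 0 ∧ ∀ x : ℤ, ∃ m : ℤ, d * p.eval (x : ℚ) = m := by
  obtain ⟨d, hd, hmap⟩ := IsLocalization.integerNormalization_spec (nonZeroDivisors ℤ) p
  refine ⟨d, nonZeroDivisors.ne_zero hd, fun x =>
    ⟨(IsLocalization.integerNormalization (nonZeroDivisors ℤ) p).eval x, ?_⟩⟩
  rw [← smul_eq_mul, ← eval_smul, Int.cast_smul_eq_zsmul, ← hmap, eval_intCast_map]
  rfl

section Archimedean

variable {𝕜 : Type*} [NormedField 𝕜] [LinearOrder 𝕜] [IsStrictOrderedRing 𝕜] [Archimedean 𝕜]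
  [OrderTopology 𝕜] {p q : 𝕜[X]}

theorem tendsto_cofinite_div_eval_intCast (hdeg : p.degree < q.degree) :
    Tendsto (fun x : ℤ => p.eval (x : 𝕜) / q.eval (x : 𝕜)) cofinite (𝓝 0) := by
  rw [Int.cofinite_eq, tendsto_sup]
  exact ⟨(div_tendsto_atBot_zero_of_degree_lt p q hdeg).comp
      (tendsto_intCast_atBot_iff.2 tendsto_id),
    (div_tendsto_atTop_zero_of_degree_lt p q hdeg).comp tendsto_intCast_atTop_atTop⟩

theorem eq_zero_of_degree_lt_of_div_eval_intCast (hdeg : p.degree < q.degree) {S : Set ℤ}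
    (hS : S.Infinite) (hint : ∀ x ∈ S, ∃ n : ℤ, p.eval (x : 𝕜) / q.eval (x : 𝕜) = n) :
    p = 0 := by
  have hq : q ≠ 0 := ne_zero_of_degree_gt hdeg
  have hsmall : ∀ᶠ x : ℤ in cofinite, p.eval (x : 𝕜) / q.eval (x : 𝕜) ∈ Set.Ioo (-1) 1 :=
    tendsto_cofinite_div_eval_intCast hdeg (Ioo_mem_nhds (by norm_num) one_pos)
  have hroots : ((↑) '' (S \ {x | ¬p.eval (x : 𝕜) / q.eval (x : 𝕜) ∈ Set.Ioo (-1) 1}) : Set 𝕜) ⊆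
      {y | IsRoot (p * q) y} := by
    rintro _ ⟨x, ⟨hxS, hx⟩, rfl⟩
    obtain ⟨n, hn⟩ := hint x hxS
    rw [Set.mem_ofPred_eq, not_not, hn, Set.mem_Ioo] at hx
    have hn0 : n = 0 := by
      rw [← Int.abs_lt_one_iff, abs_lt]; exact ⟨by exact_mod_cast hx.1, by exact_mod_cast hx.2⟩
    rw [hn0, Int.cast_zero, div_eq_zero_iff] at hn
    simpa only [Set.mem_ofPred_eq, IsRoot, eval_mul, mul_eq_zero] using hn
  have hpq : p * q = 0 := eq_zero_of_infinite_isRoot _ <|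
    ((hS.sdiff (eventually_cofinite.1 hsmall)).image Int.cast_injective.injOn).mono hroots
  exact (mul_eq_zero.1 hpq).resolve_right hq

end Archimedean

theorem dvd_of_div_eval_intCast {p q : ℚ[X]} {S : Set ℤ} (hS : S.Infinite)
    (hq : ∀ x ∈ S, q.eval (x : ℚ) ≠ 0)
    (hint : ∀ x ∈ S, ∃ n : ℤ, p.eval (x : ℚ) / q.eval (x : ℚ) = n) : q ∣ p := by
  obtain ⟨x₀, hx₀⟩ := hS.nonempty
  have hq0 : q ≠ 0 := fun h => hq x₀ hx₀ (by rw [h, eval_zero])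
  obtain ⟨d, hd, hdiv⟩ := exists_int_mul_eval_intCast (p / q)
  have hd' : (d : ℚ) ≠ 0 := Int.cast_ne_zero.2 hd
  have hrem : C (d : ℚ) * (p % q) = 0 := by
    refine eq_zero_of_degree_lt_of_div_eval_intCast (q := q) ?_ hS fun x hx => ?_
    · rw [degree_C_mul hd']
      exact EuclideanDomain.mod_lt p hq0
    obtain ⟨n, hn⟩ := hint x hx
    obtain ⟨m, hm⟩ := hdiv x
    refine ⟨d * n - m, ?_⟩
    have hsplit := congrArg (eval (x : ℚ)) (EuclideanDomain.div_add_mod p q)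
    rw [eval_add, eval_mul] at hsplit
    rw [div_eq_iff (hq x hx)] at hn ⊢
    rw [eval_mul, eval_C]
    push_cast
    linear_combination (d : ℚ) * hn - eval (x : ℚ) q * hm + (d : ℚ) * hsplit
  exact EuclideanDomain.mod_eq_zero.1 ((mul_eq_zero.1 hrem).resolve_left (C_ne_zero.2 hd'))

end Polynomial

theorem exists_polynomial_eqOn_of_finite {S : Set ℤ} (hS : S.Finite) (h : ℤ → ℚ) :
    ∃ P : ℚ[X], ∀ x ∈ S, h x = P.eval (x : ℚ) := by
  classical
  refine ⟨Lagrange.interpolate hS.toFinset (↑) h, fun x hx => ?_⟩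
  exact (Lagrange.eval_interpolate_at_node h Int.cast_injective.injOn (hS.mem_toFinset.2 hx)).symm

theorem IsPORC.exists_common_modulus {D : Set ℤ} {f g : ℤ → ℚ} (hf : IsPORC D f)
    (hg : IsPORC D g) : ∃ N : ℕ, 0 < N ∧ ∀ j : ℤ, ∃ P Q : ℚ[X],
      ∀ x ∈ D, x % (N : ℤ) = j → f x = P.eval (x : ℚ) ∧ g x = Q.eval (x : ℚ) := by
  obtain ⟨N₁, hN₁, hfP⟩ := hf
  obtain ⟨N₂, hN₂, hgQ⟩ := hg
  refine ⟨N₁ * N₂, Nat.mul_pos hN₁ hN₂, fun j => ?_⟩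
  obtain ⟨P, hP⟩ := hfP (j % N₁)
  obtain ⟨Q, hQ⟩ := hgQ (j % N₂)
  refine ⟨P, Q, fun x hx hxj => ⟨hP x hx ?_, hQ x hx ?_⟩⟩ <;> rw [← hxj, Nat.cast_mul]
  · exact (Int.emod_emod_of_dvd x (dvd_mul_right _ _)).symm
  · exact (Int.emod_emod_of_dvd x (dvd_mul_left _ _)).symm

theorem porc_quotient (D : Set ℤ) (f g h : ℤ → ℚ)
    (hf : IsPORC D f) (hg : IsPORC D g)
    (hgne : ∀ x ∈ D, g x ≠ 0)
    (hquot : ∀ x ∈ D, h x = f x / g x)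
    (hint : ∀ x ∈ D, ∃ n : ℤ, h x = (n : ℚ)) :
    IsPORC D h := by
  obtain ⟨N, hN, hmod⟩ := hf.exists_common_modulus hg
  refine ⟨N, hN, fun j => ?_⟩
  obtain ⟨P, Q, hPQ⟩ := hmod j
  set S := {x ∈ D | x % (N : ℤ) = j}
  have hS : ∀ x ∈ S, h x = P.eval (x : ℚ) / Q.eval (x : ℚ) := fun x hx => by
    rw [hquot x hx.1, (hPQ x hx.1 hx.2).1, (hPQ x hx.1 hx.2).2]
  have hQ : ∀ x ∈ S, Q.eval (x : ℚ) ≠ 0 := fun x hx => (hPQ x hx.1 hx.2).2 ▸ hgne x hx.1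
  by_cases hfin : S.Finite
  · obtain ⟨T, hT⟩ := exists_polynomial_eqOn_of_finite hfin h
    exact ⟨T, fun x hx hxj => hT x ⟨hx, hxj⟩⟩
  · obtain ⟨T, rfl⟩ := dvd_of_div_eval_intCast hfin hQ fun x hx => (hS x hx) ▸ hint x hx.1
    refine ⟨T, fun x hx hxj => ?_⟩
    rw [hS x ⟨hx, hxj⟩, eval_mul, mul_div_cancel_left₀ _ (hQ x ⟨hx, hxj⟩)]
end

section
/- Let p be an odd prime and G a finite p-group of nilpotency class at most 2. Define on the underlying set of G the operations x + y = x·y·([y,x])^((p^k+1)/2 with p^k the order of [y,x], i.e. the unique square root of [y,x]) and bracket [x,y] equal to the group commutator. Then these operations make G into a Lie ring. -/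
/-- The group commutator `[x,y] = x⁻¹y⁻¹xy`. -/
def gComm {G : Type*} [Group G] (x y : G) : G := x⁻¹ * y⁻¹ * x * y

/-- The unique square root `z^{(p^k+1)/2}` of an element `z` of odd order `p^k`. -/
noncomputable def gSqrt {G : Type*} [Group G] (z : G) : G := z ^ ((orderOf z + 1) / 2)

/-- The Lazard addition `x + y = x · y · [y,x]^{1/2}`. -/
noncomputable def lazardAdd {G : Type*} [Group G] (x y : G) : G := x * y * gSqrt (gComm y x)

/-!
In a group of odd order squaring is a bijection, so `gSqrt` is a genuine square root,
multiplicative on commuting elements. In class at most 2 the commutator is central and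
bimultiplicative, so every correction factor `[y,x]^{1/2}` is central; each Lie ring axiom
then reduces to a rearrangement of central factors, and the Jacobi identity is trivial since
all double commutators vanish.
-/

section Commutator

open scoped commutatorElement

variable {G : Type*} [Group G]

theorem gComm_eq_commutatorElement (x y : G) : gComm x y = ⁅x⁻¹, y⁻¹⁆ := by
  simp only [gComm, commutatorElement_def, inv_inv]

theorem gComm_eq_one_iff_commute {x y : G} : gComm x y = 1 ↔ Commute x y := by
  rw [gComm_eq_commutatorElement, commutatorElement_eq_one_iff_commute, Commute.inv_inv_iff]

theorem gComm_self (x : G) : gComm x x = 1 :=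
  gComm_eq_one_iff_commute.mpr (Commute.refl x)

theorem gComm_inv (x y : G) : (gComm x y)⁻¹ = gComm y x := by
  simp only [gComm]; group

variable (hC : ∀ x y g : G, Commute (gComm x y) g)
include hC

theorem gComm_mul_left (x y z : G) : gComm (x * y) z = gComm x z * gComm y z := by
  rw [show gComm (x * y) z = y⁻¹ * (gComm x z * y) * gComm y z by simp only [gComm]; group,
    (hC x z y).eq, inv_mul_cancel_left]

theorem gComm_mul_right (x y z : G) : gComm x (y * z) = gComm x y * gComm x z := by
  rw [show gComm x (y * z) = gComm x z * (z⁻¹ * (gComm x y * z)) by simp only [gComm]; group,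
    (hC x y z).eq, inv_mul_cancel_left, (hC x z _).eq]

theorem commute_gSqrt_gComm (x y g : G) : Commute (gSqrt (gComm x y)) g :=
  (hC x y g).pow_left _

end Commutator

theorem odd_orderOf_of_odd_natCard {G : Type*} [Group G] (h : Odd (Nat.card G)) (x : G) :
    Odd (orderOf x) :=
  h.of_dvd_nat (orderOf_dvd_natCard x)

theorem gSqrt_mul_self {G : Type*} [Group G] {z : G} (hz : Odd (orderOf z)) :
    gSqrt z * gSqrt z = z := by
  obtain ⟨k, hk⟩ := hz
  rw [gSqrt, ← pow_add, show (orderOf z + 1) / 2 + (orderOf z + 1) / 2 = orderOf z + 1 by omega,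
    pow_succ, pow_orderOf_eq_one, one_mul]

section SquareRoot

variable {G : Type*} [Group G] (hodd : ∀ x : G, Odd (orderOf x))
include hodd

theorem eq_one_of_mul_self_eq_one {c : G} (h : c * c = 1) : c = 1 := by
  have hdvd : orderOf c ∣ 2 := orderOf_dvd_of_pow_eq_one (by rw [sq, h])
  rcases (Nat.dvd_prime Nat.prime_two).mp hdvd with h1 | h2
  · exact orderOf_eq_one_iff.mp h1
  · exact absurd (h2 ▸ hodd c) (by decide)

theorem gSqrt_eq_of_mul_self_eq {a z : G} (ha : a * a = z) : gSqrt z = a := by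
  have hcomm : Commute a (gSqrt z) :=
    ha ▸ ((Commute.refl a).mul_right (Commute.refl a)).pow_right _
  have hsq : (a⁻¹ * gSqrt z) * (a⁻¹ * gSqrt z) = 1 := by
    rw [hcomm.inv_left.symm.mul_mul_mul_comm, gSqrt_mul_self (hodd z), ← mul_inv_rev, ha,
      inv_mul_cancel]
  exact (inv_mul_eq_one.mp (eq_one_of_mul_self_eq_one hodd hsq)).symm

theorem gSqrt_one : gSqrt (1 : G) = 1 :=
  gSqrt_eq_of_mul_self_eq hodd (mul_one 1)

theorem gSqrt_inv (z : G) : gSqrt z⁻¹ = (gSqrt z)⁻¹ :=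
  gSqrt_eq_of_mul_self_eq hodd (by rw [← mul_inv_rev, gSqrt_mul_self (hodd z)])

theorem gSqrt_mul {a b : G} (hab : Commute a b) : gSqrt (a * b) = gSqrt a * gSqrt b := by
  refine gSqrt_eq_of_mul_self_eq hodd ?_
  have hsq : Commute (gSqrt a) (gSqrt b) := (hab.pow_left _).pow_right _
  rw [hsq.symm.mul_mul_mul_comm, gSqrt_mul_self (hodd a), gSqrt_mul_self (hodd b)]

end SquareRoot

section LazardAddition

variable {G : Type*} [Group G] (hodd : ∀ x : G, Odd (orderOf x))
include hodd

theorem lazardAdd_of_commute {x y : G} (h : Commute x y) : lazardAdd x y = x * y := by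
  rw [lazardAdd, gComm_eq_one_iff_commute.mpr h.symm, gSqrt_one hodd, mul_one]

theorem lazardAdd_one (x : G) : lazardAdd x 1 = x := by
  rw [lazardAdd_of_commute hodd (Commute.one_right x), mul_one]

theorem lazardAdd_inv_right (x : G) : lazardAdd x x⁻¹ = 1 := by
  rw [lazardAdd_of_commute hodd (Commute.inv_right (Commute.refl x)), mul_inv_cancel]

theorem lazardAdd_comm (x y : G) : lazardAdd x y = lazardAdd y x := by
  have hxy : x * y = y * x * (gSqrt (gComm y x))⁻¹ * (gSqrt (gComm y x))⁻¹ := by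
    rw [mul_assoc _ (gSqrt _)⁻¹, ← mul_inv_rev, gSqrt_mul_self (hodd _), gComm_inv]
    simp only [gComm]; group
  rw [lazardAdd, lazardAdd, hxy, ← gComm_inv y x, gSqrt_inv hodd, inv_mul_cancel_right]

variable (hC : ∀ x y g : G, Commute (gComm x y) g)
include hC

theorem gComm_lazardAdd_left (x y z : G) :
    gComm (lazardAdd x y) z = lazardAdd (gComm x z) (gComm y z) := by
  rw [lazardAdd, gComm_mul_left hC, gComm_mul_left hC,
    gComm_eq_one_iff_commute.mpr (commute_gSqrt_gComm hC y x z), mul_one,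
    lazardAdd_of_commute hodd (hC x z _)]

theorem gComm_lazardAdd_right (x y z : G) :
    gComm x (lazardAdd y z) = lazardAdd (gComm x y) (gComm x z) := by
  rw [lazardAdd, gComm_mul_right hC, gComm_mul_right hC,
    gComm_eq_one_iff_commute.mpr (commute_gSqrt_gComm hC z y x).symm, mul_one,
    lazardAdd_of_commute hodd (hC x y _)]

theorem lazardAdd_assoc (x y z : G) :
    lazardAdd (lazardAdd x y) z = lazardAdd x (lazardAdd y z) := by
  have hS := commute_gSqrt_gComm hC
  simp only [lazardAdd]
  rw [gComm_mul_right hC, gComm_mul_right hC, gComm_eq_one_iff_commute.mpr (hS y x z).symm,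
    mul_one, gSqrt_mul hodd (hC z x _), gComm_mul_left hC, gComm_mul_left hC,
    gComm_eq_one_iff_commute.mpr (hS z y x), mul_one, gSqrt_mul hodd (hC y x _)]
  calc x * y * gSqrt (gComm y x) * z * (gSqrt (gComm z x) * gSqrt (gComm z y))
      = x * y * z * (gSqrt (gComm y x) * gSqrt (gComm z x) * gSqrt (gComm z y)) := by
        rw [mul_assoc (x * y), (hS y x z).eq]; group
    _ = x * y * z * (gSqrt (gComm z y) * (gSqrt (gComm y x) * gSqrt (gComm z x))) := by
        rw [(hS z y _).eq]
    _ = x * (y * z * gSqrt (gComm z y)) * (gSqrt (gComm y x) * gSqrt (gComm z x)) := by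
        group

end LazardAddition

theorem lazard_lie_ring_general {G : Type*} [Group G] (p n : ℕ) (hp : p.Prime)
    (hodd : p ≠ 2) (hcard : Nat.card G = p ^ n)
    (hclass2 : ∀ x y z : G, gComm (gComm x y) z = 1) :
    (∀ x y : G, lazardAdd x y = lazardAdd y x) ∧
    (∀ x y z : G, lazardAdd (lazardAdd x y) z = lazardAdd x (lazardAdd y z)) ∧
    (∀ x : G, lazardAdd x 1 = x) ∧
    (∀ x : G, lazardAdd x x⁻¹ = 1) ∧
    (∀ x y z : G, gComm (lazardAdd x y) z = lazardAdd (gComm x z) (gComm y z)) ∧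
    (∀ x y z : G, gComm x (lazardAdd y z) = lazardAdd (gComm x y) (gComm x z)) ∧
    (∀ x : G, gComm x x = 1) ∧
    (∀ x y z : G, lazardAdd (gComm x (gComm y z))
      (lazardAdd (gComm y (gComm z x)) (gComm z (gComm x y))) = 1) := by
  have hOdd : ∀ x : G, Odd (orderOf x) :=
    odd_orderOf_of_odd_natCard (hcard ▸ (hp.odd_of_ne_two hodd).pow)
  have hC : ∀ x y g : G, Commute (gComm x y) g :=
    fun x y g => gComm_eq_one_iff_commute.mp (hclass2 x y g)
  refine ⟨lazardAdd_comm hOdd, lazardAdd_assoc hOdd hC, lazardAdd_one hOdd,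
    lazardAdd_inv_right hOdd, gComm_lazardAdd_left hOdd hC, gComm_lazardAdd_right hOdd hC,
    gComm_self, fun x y z => ?_⟩
  rw [gComm_eq_one_iff_commute.mpr (hC y z x).symm, gComm_eq_one_iff_commute.mpr (hC z x y).symm,
    gComm_eq_one_iff_commute.mpr (hC x y z).symm, lazardAdd_one hOdd, lazardAdd_one hOdd]

/-- For an odd prime `p` and a finite group `G` of order `p^n` and nilpotency class
at most 2, the Lazard operations (addition `x+y = xy[y,x]^{1/2}` and bracket the group
commutator) make `G` into a Lie ring: addition is a commutative group operation with
identity `1` and inverse `x⁻¹`, and the bracket is biadditive, alternating and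
satisfies the Jacobi identity. -/
theorem lazard_lie_ring {G : Type*} [Group G] [Finite G] (p n : ℕ) (hp : p.Prime)
    (hodd : p ≠ 2) (hcard : Nat.card G = p ^ n)
    (hclass2 : ∀ x y z : G, gComm (gComm x y) z = 1) :
    (∀ x y : G, lazardAdd x y = lazardAdd y x) ∧
    (∀ x y z : G, lazardAdd (lazardAdd x y) z = lazardAdd x (lazardAdd y z)) ∧
    (∀ x : G, lazardAdd x 1 = x) ∧
    (∀ x : G, lazardAdd x x⁻¹ = 1) ∧
    (∀ x y z : G, gComm (lazardAdd x y) z = lazardAdd (gComm x z) (gComm y z)) ∧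
    (∀ x y z : G, gComm x (lazardAdd y z) = lazardAdd (gComm x y) (gComm x z)) ∧
    (∀ x : G, gComm x x = 1) ∧
    (∀ x y z : G, lazardAdd (gComm x (gComm y z))
      (lazardAdd (gComm y (gComm z x)) (gComm z (gComm x y))) = 1) :=
  lazard_lie_ring_general p n hp hodd hcard hclass2
end

section
/- Let 𝔬 be a discrete valuation ring with maximal ideal 𝔭 and uniformizer t, and let B = 𝔬/𝔭^{μ₁} ⊕ 𝔬/𝔭^{μ₂} with μ₁ > μ₂ ≥ 1. A pair of matrices (Y, Z) ∈ GL₂(𝔬/𝔭) × GL₂(𝔬/𝔭) arises as the induced action of an automorphism of B on (B/𝔭B, B[𝔭]) (with respect to the bases induced by the generators e₁, e₂ and t^{μ₁−1}e₁, t^{μ₂−1}e₂) if and only if Y is lower triangular, Z is upper triangular, and the diagonals of Y and Z coincide. -/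
/-!
Write `B = R ⧸ (tⁿ) × R ⧸ (tᵐ)` with `n > m ≥ 1` and `e₁ = (1, 0)`, `e₂ = (0, 1)`; the `t`-torsion
`B[t]` has basis `tⁿ⁻¹e₁, tᵐ⁻¹e₂`. For linear `h`, `tᵐ h(e₂) = h(tᵐe₂) = 0`, which forces the first
coordinate of `h(e₂)` into `t (R ⧸ (tⁿ))`: `Y` is lower triangular. Next `h(tⁿ⁻¹e₁) = tⁿ⁻¹h(e₁)`,
whose second coordinate vanishes because `tⁿ⁻¹` kills `R ⧸ (tᵐ)` and whose first coordinate is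
`tⁿ⁻¹` times a lift of `Y₀₀`; similarly `h(tᵐ⁻¹e₂)` has second coordinate `tᵐ⁻¹` times a lift of
`Y₁₁`. As multiplication by `tᵏ⁻¹` embeds `R ⧸ (t)` into `R ⧸ (tᵏ)`, this gives `Z₁₀ = 0` and the
equality of the diagonals. Conversely, given unit lifts `a, d` of the diagonal and lifts `b, c`,
a lower block-triangular automorphism followed by an upper one realises a matrix
`[[a', tⁿ⁻ᵐc], [b, d]]` with `a' ≡ a mod tⁿ⁻ᵐ`, and this induces the prescribed pair.
-/

open Ideal Ideal.Quotient

section QuotientMaps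

variable {R : Type*} [CommRing R]

lemma Ideal.Quotient.smul_mk (I : Ideal R) (r x : R) : r • mk I x = mk I (r * x) := rfl

lemma Ideal.Quotient.smul_one_eq_mk (I : Ideal R) (r : R) : r • (1 : R ⧸ I) = mk I r := by
  rw [← map_one (mk I), smul_mk, mul_one]

def Ideal.Quotient.mulSpan (c : R) {a b : R} (h : b ∣ c * a) :
    R ⧸ span {a} →ₗ[R] R ⧸ span {b} :=
  Submodule.mapQ _ _ (LinearMap.mulLeft R c) <| by
    rw [Submodule.span_le, Set.singleton_subset_iff]
    exact mem_span_singleton.2 h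

@[simp]
lemma Ideal.Quotient.mulSpan_mk (c : R) {a b : R} (h : b ∣ c * a) (x : R) :
    mulSpan c h (mk _ x) = mk _ (c * x) := rfl

lemma IsLocalRing.isUnit_of_isUnit_mk [IsLocalRing R] {I : Ideal R} (hI : I ≤ maximalIdeal R)
    {x : R} (hx : IsUnit (mk I x)) : IsUnit x := by
  have := isLocalHom_of_le_jacobson_bot I (by rwa [jacobson_eq_maximalIdeal ⊥ bot_ne_top])
  exact isUnit_of_map_unit _ _ hx

end QuotientMaps

namespace Ideal.Quotient

variable {R : Type*} [CommRing R] (t : R) {n : ℕ}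

def reducePow (hn : n ≠ 0) : R ⧸ span {t ^ n} →ₗ[R] R ⧸ span {t} :=
  mulSpan 1 (by simpa using dvd_pow_self t hn)

def mulPowPred (n : ℕ) : R ⧸ span {t} →ₗ[R] R ⧸ span {t ^ n} :=
  mulSpan (t ^ (n - 1)) (by cases n <;> simp [pow_succ])

@[simp]
lemma reducePow_mk (hn : n ≠ 0) (x : R) : reducePow t hn (mk _ x) = mk _ x := by
  simp [reducePow]

@[simp]
lemma mulPowPred_mk (x : R) : mulPowPred t n (mk _ x) = mk _ (t ^ (n - 1) * x) := rfl

lemma self_smul_eq_zero (z : R ⧸ span {t}) : t • z = 0 := by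
  obtain ⟨x, rfl⟩ := mk_surjective z
  rw [smul_mk, eq_zero_iff_mem, mem_span_singleton]
  exact dvd_mul_right t x

lemma pow_smul_eq_zero_of_le {m j : ℕ} (hmj : m ≤ j) (z : R ⧸ span {t ^ m}) : t ^ j • z = 0 := by
  obtain ⟨x, rfl⟩ := mk_surjective z
  rw [smul_mk, eq_zero_iff_mem, mem_span_singleton]
  exact (pow_dvd_pow t hmj).mul_right x

lemma smul_mk_pow_pred (r : R) :
    r • mk (span {t ^ n}) (t ^ (n - 1)) = mulPowPred t n (mk _ r) := by
  rw [smul_mk, mulPowPred_mk, mul_comm]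

lemma reducePow_smul_one_add_smul (hn : n ≠ 0) (r : R) (w : R ⧸ span {t ^ n}) :
    reducePow t hn (r • 1 + t • w) = mk _ r := by
  rw [map_add, map_smul, map_smul, self_smul_eq_zero, add_zero, ← map_one (mk _), reducePow_mk,
    smul_mk, mul_one]

lemma pow_pred_smul_eq_mulPowPred_reducePow (hn : n ≠ 0) (z : R ⧸ span {t ^ n}) :
    t ^ (n - 1) • z = mulPowPred t n (reducePow t hn z) := by
  obtain ⟨x, rfl⟩ := mk_surjective z
  rw [reducePow_mk, mulPowPred_mk, smul_mk]

variable {t}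

lemma mulPowPred_injective [IsDomain R] (ht : t ≠ 0) (hn : n ≠ 0) :
    Function.Injective (mulPowPred t n) := by
  rw [injective_iff_map_eq_zero]
  intro z hz
  obtain ⟨x, rfl⟩ := mk_surjective z
  rw [mulPowPred_mk, eq_zero_iff_mem, mem_span_singleton, ← pow_sub_one_mul hn,
    mul_dvd_mul_iff_left (pow_ne_zero _ ht)] at hz
  rwa [eq_zero_iff_mem, mem_span_singleton]

lemma reducePow_eq_zero_of_pow_smul_eq_zero [IsDomain R] (ht : t ≠ 0) {m : ℕ} (hmn : m < n)
    {z : R ⧸ span {t ^ n}} (hz : t ^ m • z = 0) : reducePow t (Nat.ne_zero_of_lt hmn) z = 0 := by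
  apply mulPowPred_injective ht (Nat.ne_zero_of_lt hmn)
  rw [← pow_pred_smul_eq_mulPowPred_reducePow, map_zero,
    show n - 1 = (n - 1 - m) + m by omega, pow_add, mul_smul, hz, smul_zero]

end Ideal.Quotient

section InducedPair

variable {R : Type*} [CommRing R] (t : R) (n m : ℕ)

local notation "B" => (R ⧸ span {t ^ n}) × (R ⧸ span {t ^ m})

/-- `Y` and `Z` are the matrices of the maps induced by `h` on `B / tB` and on `B[t]`, in the bases
given by `e₁ = (1, 0), e₂ = (0, 1)` and by `tⁿ⁻¹e₁, tᵐ⁻¹e₂`; column `j` holds the image of the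
`j`-th basis vector. -/
def InducesPair (h : B →ₗ[R] B) (Y Z : Matrix (Fin 2) (Fin 2) (R ⧸ span {t})) : Prop :=
  ∃ Y' Z' : Matrix (Fin 2) (Fin 2) R,
    (∀ i j, mk _ (Y' i j) = Y i j) ∧ (∀ i j, mk _ (Z' i j) = Z i j) ∧
    (∃ b₁ : B, h (1, 0) = Y' 0 0 • (1, 0) + Y' 1 0 • (0, 1) + t • b₁) ∧
    (∃ b₂ : B, h (0, 1) = Y' 0 1 • (1, 0) + Y' 1 1 • (0, 1) + t • b₂) ∧
    h (mk _ (t ^ (n - 1)), 0) =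
      Z' 0 0 • (mk _ (t ^ (n - 1)), 0) + Z' 1 0 • (0, mk _ (t ^ (m - 1))) ∧
    h (0, mk _ (t ^ (m - 1))) =
      Z' 0 1 • (mk _ (t ^ (n - 1)), 0) + Z' 1 1 • (0, mk _ (t ^ (m - 1)))

variable {t n m}

theorem InducesPair.triangular_diag_eq [IsDomain R] (ht : t ≠ 0) (hm : m ≠ 0) (hmn : m < n)
    {h : B →ₗ[R] B} {Y Z : Matrix (Fin 2) (Fin 2) (R ⧸ span {t})} (hYZ : InducesPair t n m h Y Z) :
    Y 0 1 = 0 ∧ Z 1 0 = 0 ∧ Y 0 0 = Z 0 0 ∧ Y 1 1 = Z 1 1 := by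
  obtain ⟨Y', Z', hY', hZ', ⟨b₁, h₁⟩, ⟨b₂, h₂⟩, hs₁, hs₂⟩ := hYZ
  have hn : n ≠ 0 := by omega
  set p := h (1, 0)
  set q := h (0, 1)
  have hp₁ : reducePow t hn p.1 = Y 0 0 := by
    rw [h₁, ← hY']; simpa using reducePow_smul_one_add_smul t hn (Y' 0 0) b₁.1
  have hq₁ : reducePow t hn q.1 = Y 0 1 := by
    rw [h₂, ← hY']; simpa using reducePow_smul_one_add_smul t hn (Y' 0 1) b₂.1
  have hq₂ : reducePow t hm q.2 = Y 1 1 := by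
    rw [h₂, ← hY']; simpa using reducePow_smul_one_add_smul t hm (Y' 1 1) b₂.2
  -- `e₂` is killed by `tᵐ`, hence so is `q`, which forces its first coordinate into `t (R ⧸ tⁿ)`.
  have hq : t ^ m • q = 0 := by
    rw [← map_smul, Prod.smul_mk, smul_zero, pow_smul_eq_zero_of_le t le_rfl, Prod.mk_zero_zero,
      map_zero]
  have hp' : t ^ (n - 1) • p = h (mk _ (t ^ (n - 1)), 0) := by
    rw [← map_smul, Prod.smul_mk, smul_zero, smul_one_eq_mk]
  have hq' : t ^ (m - 1) • q = h (0, mk _ (t ^ (m - 1))) := by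
    rw [← map_smul, Prod.smul_mk, smul_zero, smul_one_eq_mk]
  rw [← hp'] at hs₁
  rw [← hq'] at hs₂
  have hs₁₁ := congrArg Prod.fst hs₁
  have hs₁₂ := congrArg Prod.snd hs₁
  have hs₂₂ := congrArg Prod.snd hs₂
  simp only [Prod.smul_fst, Prod.smul_snd, Prod.fst_add, Prod.snd_add, smul_zero, add_zero,
    zero_add, smul_mk_pow_pred, pow_pred_smul_eq_mulPowPred_reducePow t hn,
    pow_pred_smul_eq_mulPowPred_reducePow t hm, pow_smul_eq_zero_of_le t (show m ≤ n - 1 by omega),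
    hZ'] at hs₁₁ hs₁₂ hs₂₂
  refine ⟨?_, ?_, ?_, ?_⟩
  · rw [← hq₁, reducePow_eq_zero_of_pow_smul_eq_zero ht hmn (congrArg Prod.fst hq)]
  · exact mulPowPred_injective ht hm (hs₁₂.symm.trans (map_zero _).symm)
  · rw [← hp₁]; exact mulPowPred_injective ht hn hs₁₁
  · rw [← hq₂]; exact mulPowPred_injective ht hm hs₂₂

variable (t) in
theorem exists_linearEquiv_apply_mk (hmn : m ≤ n) (a d : Rˣ) (b c : R) :
    ∃ h : B ≃ₗ[R] B, ∃ u : R, ∀ x y : R, h (mk _ x, mk _ y) =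
      (mk _ ((a + t ^ (n - m) * u) * x + t ^ (n - m) * c * y), mk _ (b * x + d * y)) := by
  have hlow : t ^ m ∣ b * t ^ n := (pow_dvd_pow t hmn).mul_left b
  have hup : t ^ n ∣ t ^ (n - m) * ↑d⁻¹ * c * t ^ m :=
    ⟨↑d⁻¹ * c, by rw [← pow_sub_mul_pow t hmn]; ring⟩
  let lower := (LinearEquiv.smulOfUnit a).skewProd (LinearEquiv.smulOfUnit d) (mulSpan b hlow)
  let upper := (LinearEquiv.refl R _).skewProd (LinearEquiv.refl R _) (mulSpan _ hup)
  -- conjugated by the swap of factors, `upper` becomes an upper block-triangular automorphism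
  refine ⟨lower.trans ((LinearEquiv.prodComm R _ _).trans
    (upper.trans (LinearEquiv.prodComm R _ _))), ↑d⁻¹ * c * b, fun x y => ?_⟩
  simp only [lower, upper, LinearEquiv.trans_apply, LinearEquiv.skewProd_apply,
    LinearEquiv.prodComm_apply, LinearEquiv.refl_apply, Prod.swap_prod_mk, LinearEquiv.smulOfUnit,
    DistribMulAction.toLinearEquiv_apply, Units.smul_def, smul_mk, mulSpan_mk, ← map_add]
  refine congrArg₂ Prod.mk (congrArg _ ?_) (congrArg _ (add_comm _ _))
  linear_combination t ^ (n - m) * c * y * d.inv_mul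

theorem exists_inducesPair_of_triangular [IsLocalRing R] (ht : t ∈ IsLocalRing.maximalIdeal R)
    (hm : m ≠ 0) (hmn : m < n) {Y Z : Matrix (Fin 2) (Fin 2) (R ⧸ span {t})}
    (hY00 : IsUnit (Y 0 0)) (hY11 : IsUnit (Y 1 1)) (hY01 : Y 0 1 = 0) (hZ10 : Z 1 0 = 0)
    (h00 : Y 0 0 = Z 0 0) (h11 : Y 1 1 = Z 1 1) :
    ∃ h : B ≃ₗ[R] B, InducesPair t n m h.toLinearMap Y Z := by
  have hmax : span {t} ≤ IsLocalRing.maximalIdeal R := span_le.2 (Set.singleton_subset_iff.2 ht)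
  obtain ⟨a, ha⟩ := mk_surjective (Y 0 0)
  obtain ⟨d, hd⟩ := mk_surjective (Y 1 1)
  obtain ⟨b, hb⟩ := mk_surjective (Y 1 0)
  obtain ⟨c, hc⟩ := mk_surjective (Z 0 1)
  obtain ⟨a, rfl⟩ := IsLocalRing.isUnit_of_isUnit_mk hmax (ha ▸ hY00)
  obtain ⟨d, rfl⟩ := IsLocalRing.isUnit_of_isUnit_mk hmax (hd ▸ hY11)
  obtain ⟨h, u, hh⟩ := exists_linearEquiv_apply_mk t hmn.le a d b c
  have hk : mk (span {t}) (t ^ (n - m)) = 0 := by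
    rw [eq_zero_iff_mem, mem_span_singleton]; exact dvd_pow_self t (by omega)
  refine ⟨h, !![a + t ^ (n - m) * u, t ^ (n - m) * c; b, d], !![a + t ^ (n - m) * u, c; 0, d],
    ?_, ?_, ⟨0, ?_⟩, ⟨0, ?_⟩, ?_, ?_⟩
  · intro i j; fin_cases i <;> fin_cases j <;> simp [hk, ha, hb, hd, hY01]
  · intro i j; fin_cases i <;> fin_cases j <;> simp [hk, ha, hc, hd, hZ10, h00, h11]
  · have := hh 1 0
    rw [map_one, map_zero] at this
    rw [LinearEquiv.coe_coe, this]; ext <;> simp [Algebra.smul_def]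
  · have := hh 0 1
    rw [map_one, map_zero] at this
    rw [LinearEquiv.coe_coe, this]; ext <;> simp [Algebra.smul_def]
  · have := hh (t ^ (n - 1)) 0
    rw [map_zero] at this
    rw [LinearEquiv.coe_coe, this]; ext
    · simp [Algebra.smul_def]
    · suffices mk (span {t ^ m}) (b * t ^ (n - 1)) = 0 by simpa
      rw [eq_zero_iff_mem, mem_span_singleton]
      exact (pow_dvd_pow t (by omega)).mul_left b
  · have hpow : t ^ (n - m) * t ^ (m - 1) = t ^ (n - 1) := by rw [← pow_add]; congr 1; omega
    have := hh 0 (t ^ (m - 1))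
    rw [map_zero] at this
    rw [LinearEquiv.coe_coe, this]; ext
    · simp [Algebra.smul_def, ← hpow]; ring
    · simp [Algebra.smul_def]

end InducedPair

theorem automorphism_induced_pair_iff_general (𝔬 : Type) [CommRing 𝔬] [IsDomain 𝔬]
    [IsDiscreteValuationRing 𝔬] (t : 𝔬) (ht : Irreducible t)
    (μ₁ μ₂ : ℕ) (h21 : 1 ≤ μ₂) (h12 : μ₂ < μ₁)
    (Y Z : Matrix (Fin 2) (Fin 2) (𝔬 ⧸ Ideal.span {t}))
    (hY : IsUnit Y.det) :
    (∃ (h : ((𝔬 ⧸ Ideal.span {t ^ μ₁}) × (𝔬 ⧸ Ideal.span {t ^ μ₂})) ≃ₗ[𝔬]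
            ((𝔬 ⧸ Ideal.span {t ^ μ₁}) × (𝔬 ⧸ Ideal.span {t ^ μ₂})))
       (Y' Z' : Matrix (Fin 2) (Fin 2) 𝔬),
        (∀ i j, Ideal.Quotient.mk (Ideal.span {t}) (Y' i j) = Y i j) ∧
        (∀ i j, Ideal.Quotient.mk (Ideal.span {t}) (Z' i j) = Z i j) ∧
        (∃ b₁ : (𝔬 ⧸ Ideal.span {t ^ μ₁}) × (𝔬 ⧸ Ideal.span {t ^ μ₂}),
          h (1, 0) = Y' 0 0 • (1, 0) + Y' 1 0 • (0, 1) + t • b₁) ∧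
        (∃ b₂ : (𝔬 ⧸ Ideal.span {t ^ μ₁}) × (𝔬 ⧸ Ideal.span {t ^ μ₂}),
          h (0, 1) = Y' 0 1 • (1, 0) + Y' 1 1 • (0, 1) + t • b₂) ∧
        (h (Ideal.Quotient.mk (Ideal.span {t ^ μ₁}) (t ^ (μ₁ - 1)), 0) =
          Z' 0 0 • (Ideal.Quotient.mk (Ideal.span {t ^ μ₁}) (t ^ (μ₁ - 1)), 0) +
          Z' 1 0 • (0, Ideal.Quotient.mk (Ideal.span {t ^ μ₂}) (t ^ (μ₂ - 1)))) ∧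
        (h (0, Ideal.Quotient.mk (Ideal.span {t ^ μ₂}) (t ^ (μ₂ - 1))) =
          Z' 0 1 • (Ideal.Quotient.mk (Ideal.span {t ^ μ₁}) (t ^ (μ₁ - 1)), 0) +
          Z' 1 1 • (0, Ideal.Quotient.mk (Ideal.span {t ^ μ₂}) (t ^ (μ₂ - 1)))))
    ↔ (Y 0 1 = 0 ∧ Z 1 0 = 0 ∧ Y 0 0 = Z 0 0 ∧ Y 1 1 = Z 1 1) := by
  have hμ₂ : μ₂ ≠ 0 := by omega
  constructor
  · rintro ⟨h, hYZ⟩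
    exact InducesPair.triangular_diag_eq (h := h.toLinearMap) ht.ne_zero hμ₂ h12 hYZ
  · rintro ⟨hY01, hZ10, h00, h11⟩
    rw [Matrix.det_fin_two, hY01, zero_mul, sub_zero, IsUnit.mul_iff] at hY
    have ht_mem : t ∈ IsLocalRing.maximalIdeal 𝔬 := (IsLocalRing.mem_maximalIdeal t).2 ht.not_isUnit
    exact exists_inducesPair_of_triangular ht_mem hμ₂ h12 hY.1 hY.2 hY01 hZ10 h00 h11

/-- Let `𝔬` be a discrete valuation ring with maximal ideal `𝔭 = (t)` and finite
residue field, and `B = 𝔬/𝔭^{μ₁} ⊕ 𝔬/𝔭^{μ₂}` with `μ₁ > μ₂ ≥ 1`.  A pair of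
invertible matrices `(Y, Z)` over the residue field arises as the action induced by
an automorphism of `B` on `(B/𝔭B, B[𝔭])` — with respect to the bases induced by the
generators `e₁, e₂` and `t^{μ₁−1}e₁, t^{μ₂−1}e₂` — if and only if `Y` is lower
triangular, `Z` is upper triangular, and the diagonals of `Y` and `Z` coincide. -/
theorem automorphism_induced_pair_iff (𝔬 : Type) [CommRing 𝔬] [IsDomain 𝔬]
    [IsDiscreteValuationRing 𝔬] (t : 𝔬) (ht : Irreducible t)
    [Finite (𝔬 ⧸ Ideal.span {t})]
    (μ₁ μ₂ : ℕ) (h21 : 1 ≤ μ₂) (h12 : μ₂ < μ₁)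
    (Y Z : Matrix (Fin 2) (Fin 2) (𝔬 ⧸ Ideal.span {t}))
    (hY : IsUnit Y.det) (hZ : IsUnit Z.det) :
    (∃ (h : ((𝔬 ⧸ Ideal.span {t ^ μ₁}) × (𝔬 ⧸ Ideal.span {t ^ μ₂})) ≃ₗ[𝔬]
            ((𝔬 ⧸ Ideal.span {t ^ μ₁}) × (𝔬 ⧸ Ideal.span {t ^ μ₂})))
       (Y' Z' : Matrix (Fin 2) (Fin 2) 𝔬),
        (∀ i j, Ideal.Quotient.mk (Ideal.span {t}) (Y' i j) = Y i j) ∧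
        (∀ i j, Ideal.Quotient.mk (Ideal.span {t}) (Z' i j) = Z i j) ∧
        (∃ b₁ : (𝔬 ⧸ Ideal.span {t ^ μ₁}) × (𝔬 ⧸ Ideal.span {t ^ μ₂}),
          h (1, 0) = Y' 0 0 • (1, 0) + Y' 1 0 • (0, 1) + t • b₁) ∧
        (∃ b₂ : (𝔬 ⧸ Ideal.span {t ^ μ₁}) × (𝔬 ⧸ Ideal.span {t ^ μ₂}),
          h (0, 1) = Y' 0 1 • (1, 0) + Y' 1 1 • (0, 1) + t • b₂) ∧
        (h (Ideal.Quotient.mk (Ideal.span {t ^ μ₁}) (t ^ (μ₁ - 1)), 0) =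
          Z' 0 0 • (Ideal.Quotient.mk (Ideal.span {t ^ μ₁}) (t ^ (μ₁ - 1)), 0) +
          Z' 1 0 • (0, Ideal.Quotient.mk (Ideal.span {t ^ μ₂}) (t ^ (μ₂ - 1)))) ∧
        (h (0, Ideal.Quotient.mk (Ideal.span {t ^ μ₂}) (t ^ (μ₂ - 1))) =
          Z' 0 1 • (Ideal.Quotient.mk (Ideal.span {t ^ μ₁}) (t ^ (μ₁ - 1)), 0) +
          Z' 1 1 • (0, Ideal.Quotient.mk (Ideal.span {t ^ μ₂}) (t ^ (μ₂ - 1)))))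
    ↔ (Y 0 1 = 0 ∧ Z 1 0 = 0 ∧ Y 0 0 = Z 0 0 ∧ Y 1 1 = Z 1 1) :=
  automorphism_induced_pair_iff_general 𝔬 t ht μ₁ μ₂ h21 h12 Y Z hY
end
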